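/- arXiv:1312.6926 — 4 statements merged into one kernel-verified Lean document; each statement's English description precedes it below -/
import Mathlib

section
/- Let F^{AA*} and F^{BB*} denote the empirical spectral distributions of AA* and BB* where A and B are m×k complex matrices. Then sup_x |F^{AA*}(x) - F^{BB*}(x)| ≤ rank(A - B)/m. -/
open Matrix

/-- The empirical spectral distribution of an `m × m` Hermitian complex matrix:
`F^M(x) = (#{j : λ_j ≤ x}) / m` where the `λ_j` are the eigenvalues of `M`. -/
noncomputable def ESD {m : ℕ} {M : Matrix (Fin m) (Fin m) ℂ}
    (hM : M.IsHermitian) (x : ℝ) : ℝ :=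
  (Finset.univ.filter fun j => hM.eigenvalues j ≤ x).card / m

/-!
Let `S` be the span of the eigenvectors of `BBᴴ` with eigenvalue `≤ x` and `K = ker (A - B)ᴴ`,
a subspace of codimension `rank (A - B)`. On `K` the quadratic forms of `AAᴴ` and `BBᴴ` agree,
both being `‖Aᴴ v‖² = ‖Bᴴ v‖²`, so the form of `AAᴴ` is at most `x ‖v‖²` on `S ⊓ K`. Such a
subspace meets the span of the eigenvectors of `AAᴴ` with eigenvalue `> x` trivially, so its
dimension is at most the number of eigenvalues of `AAᴴ` that are `≤ x`. As
`dim (S ⊓ K) ≥ dim S - rank (A - B)`, the two counts differ by at most `rank (A - B)`, in either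
order.
-/

open Module Finset
open scoped InnerProductSpace

namespace OrthonormalBasis

variable {𝕜 E ι : Type*} [RCLike 𝕜] [NormedAddCommGroup E] [InnerProductSpace 𝕜 E] [Fintype ι]
  (b : OrthonormalBasis ι 𝕜 E)

theorem inner_eq_zero_of_mem_span_image {s : Set ι} {v : E} (hv : v ∈ Submodule.span 𝕜 (b '' s))
    {i : ι} (hi : i ∉ s) : ⟪b i, v⟫_𝕜 = 0 := by
  have hle : Submodule.span 𝕜 (b '' s) ≤ (𝕜 ∙ b i)ᗮ := by
    rw [Submodule.span_le]
    rintro _ ⟨j, hj, rfl⟩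
    exact Submodule.mem_orthogonal_singleton_iff_inner_right.2
      (b.orthonormal.2 (ne_of_mem_of_not_mem hj hi).symm)
  exact Submodule.mem_orthogonal_singleton_iff_inner_right.1 (hle hv)

theorem finrank_span_image (s : Finset ι) :
    finrank 𝕜 (Submodule.span 𝕜 (b '' s)) = #s := by
  rw [Set.image_eq_range]
  exact (finrank_span_eq_card (b.orthonormal.linearIndependent.comp _ Subtype.val_injective)).trans
    (Fintype.card_coe s)

end OrthonormalBasis

namespace LinearMap.IsSymmetric

variable {𝕜 E ι κ : Type*} [RCLike 𝕜] [NormedAddCommGroup E] [InnerProductSpace 𝕜 E]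
  [Fintype ι] [Fintype κ] {T T' : E →ₗ[𝕜] E} {b : OrthonormalBasis ι 𝕜 E}
  {b' : OrthonormalBasis κ 𝕜 E} {μ : ι → ℝ} {μ' : κ → ℝ} {x : ℝ}

theorem re_inner_apply_self_eq_sum (hT : T.IsSymmetric) (hb : ∀ i, T (b i) = (μ i : 𝕜) • b i)
    (v : E) : RCLike.re ⟪v, T v⟫_𝕜 = ∑ i, μ i * ‖⟪b i, v⟫_𝕜‖ ^ 2 := by
  rw [← b.sum_inner_mul_inner, map_sum]
  refine sum_congr rfl fun i _ => ?_
  rw [← hT, hb, inner_smul_left, RCLike.conj_ofReal, ← inner_conj_symm v, mul_left_comm,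
    RCLike.conj_mul, ← RCLike.ofReal_pow, ← RCLike.ofReal_mul, RCLike.ofReal_re]

theorem re_inner_apply_self_le_of_mem_span (hT : T.IsSymmetric)
    (hb : ∀ i, T (b i) = (μ i : 𝕜) • b i) {v : E}
    (hv : v ∈ Submodule.span 𝕜 (b '' ↑(univ.filter fun i => μ i ≤ x))) :
    RCLike.re ⟪v, T v⟫_𝕜 ≤ x * ‖v‖ ^ 2 := by
  rw [hT.re_inner_apply_self_eq_sum hb, ← b.sum_sq_norm_inner_right, mul_sum]
  refine sum_le_sum fun i _ => ?_
  by_cases hi : μ i ≤ x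
  · exact mul_le_mul_of_nonneg_right hi (by positivity)
  · simp [b.inner_eq_zero_of_mem_span_image hv (by simpa using hi)]

theorem lt_re_inner_apply_self_of_mem_span (hT : T.IsSymmetric)
    (hb : ∀ i, T (b i) = (μ i : 𝕜) • b i) {v : E}
    (hv : v ∈ Submodule.span 𝕜 (b '' ↑(univ.filter fun i => x < μ i))) (hv0 : v ≠ 0) :
    x * ‖v‖ ^ 2 < RCLike.re ⟪v, T v⟫_𝕜 := by
  obtain ⟨j, hj⟩ : ∃ j, ⟪b j, v⟫_𝕜 ≠ 0 := by
    by_contra! h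
    exact hv0 (by rw [← b.sum_repr' v]; simp [h])
  have hxj : x < μ j := by
    by_contra h
    exact hj (b.inner_eq_zero_of_mem_span_image hv (by simpa using h))
  rw [hT.re_inner_apply_self_eq_sum hb, ← b.sum_sq_norm_inner_right, mul_sum]
  refine sum_lt_sum (fun i _ => ?_) ⟨j, mem_univ j, by gcongr⟩
  by_cases hi : x < μ i
  · exact mul_le_mul_of_nonneg_right hi.le (by positivity)
  · simp [b.inner_eq_zero_of_mem_span_image hv (by simpa using hi)]

theorem finrank_le_card_filter_of_re_inner_le (hT : T.IsSymmetric)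
    (hb : ∀ i, T (b i) = (μ i : 𝕜) • b i) (V : Submodule 𝕜 E)
    (hV : ∀ v ∈ V, RCLike.re ⟪v, T v⟫_𝕜 ≤ x * ‖v‖ ^ 2) :
    finrank 𝕜 V ≤ #(univ.filter fun i => μ i ≤ x) := by
  have : FiniteDimensional 𝕜 E := b.toBasis.finiteDimensional_of_finite
  have hdisj : Disjoint V (Submodule.span 𝕜 (b '' ↑(univ.filter fun i => x < μ i))) := by
    refine Submodule.disjoint_def.2 fun v hvV hvW => ?_
    by_contra hv0
    exact (hV v hvV).not_gt (hT.lt_re_inner_apply_self_of_mem_span hb hvW hv0)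
  have hsum := Submodule.finrank_add_finrank_le_of_disjoint hdisj
  rw [b.finrank_span_image, finrank_eq_card_basis b.toBasis] at hsum
  have hcard := card_filter_add_card_filter_not (s := univ) fun i => μ i ≤ x
  simp only [not_le, card_univ] at hcard
  omega

theorem card_filter_add_finrank_le_of_re_inner_le (hT : T.IsSymmetric)
    (hb : ∀ i, T (b i) = (μ i : 𝕜) • b i) (hT' : T'.IsSymmetric)
    (hb' : ∀ i, T' (b' i) = (μ' i : 𝕜) • b' i) (V : Submodule 𝕜 E)
    (hV : ∀ v ∈ V, RCLike.re ⟪v, T v⟫_𝕜 ≤ RCLike.re ⟪v, T' v⟫_𝕜) :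
    #(univ.filter fun i => μ' i ≤ x) + finrank 𝕜 V ≤
      #(univ.filter fun i => μ i ≤ x) + finrank 𝕜 E := by
  have : FiniteDimensional 𝕜 E := b.toBasis.finiteDimensional_of_finite
  set W := Submodule.span 𝕜 (b' '' ↑(univ.filter fun i => μ' i ≤ x))
  have hWV : finrank 𝕜 ↥(W ⊓ V) ≤ #(univ.filter fun i => μ i ≤ x) :=
    hT.finrank_le_card_filter_of_re_inner_le hb _ fun v hv =>
      (hV v hv.2).trans (hT'.re_inner_apply_self_le_of_mem_span hb' hv.1)
  have hsup := Submodule.finrank_sup_add_finrank_inf_eq W V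
  rw [b'.finrank_span_image] at hsup
  have := Submodule.finrank_le (W ⊔ V)
  omega

end LinearMap.IsSymmetric

namespace Matrix

theorem rank_neg {R m n : Type*} [CommRing R] [Fintype n] (A : Matrix m n R) :
    (-A).rank = A.rank := by
  rw [← neg_one_smul R A, rank_smul_of_mem_nonZeroDivisors]
  exact isUnit_one.neg.mem_nonZeroDivisors

variable {𝕜 m n : Type*} [RCLike 𝕜] [Fintype n] [DecidableEq n]

theorem IsHermitian.toEuclideanLin_eigenvectorBasis {A : Matrix n n 𝕜} (hA : A.IsHermitian)
    (i : n) :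
    toEuclideanLin A (hA.eigenvectorBasis i) = (hA.eigenvalues i : 𝕜) • hA.eigenvectorBasis i := by
  rw [toLpLin_apply, hA.mulVec_eigenvectorBasis, RCLike.real_smul_eq_coe_smul (K := 𝕜)]
  rfl

theorem inner_toEuclideanLin_mul_conjTranspose_self [Fintype m] [DecidableEq m] (A : Matrix m n 𝕜)
    (v : EuclideanSpace 𝕜 m) :
    ⟪v, toEuclideanLin (A * Aᴴ) v⟫_𝕜 = ⟪toEuclideanLin Aᴴ v, toEuclideanLin Aᴴ v⟫_𝕜 := by
  rw [toLpLin_mul_same, LinearMap.comp_apply, ← LinearMap.adjoint_inner_left,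
    ← toEuclideanLin_conjTranspose_eq_adjoint]

theorem finrank_ker_toEuclideanLin_add_rank [Fintype m] (A : Matrix m n 𝕜) :
    finrank 𝕜 (LinearMap.ker (toEuclideanLin A)) + A.rank = Fintype.card n := by
  rw [rank_eq_finrank_range_toLin A (EuclideanSpace.basisFun m 𝕜).toBasis
      (EuclideanSpace.basisFun n 𝕜).toBasis, ← toEuclideanLin_eq_toLin_orthonormal, add_comm,
    LinearMap.finrank_range_add_finrank_ker, finrank_euclideanSpace]

theorem card_eigenvalues_mul_conjTranspose_self_le_add_rank [Fintype m] [DecidableEq m]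
    (A B : Matrix m n 𝕜) (x : ℝ) :
    #(univ.filter fun i => (isHermitian_mul_conjTranspose_self B).eigenvalues i ≤ x) ≤
      #(univ.filter fun i => (isHermitian_mul_conjTranspose_self A).eigenvalues i ≤ x) +
        (A - B).rank := by
  have hA := isHermitian_mul_conjTranspose_self A
  have hB := isHermitian_mul_conjTranspose_self B
  have hV : ∀ v ∈ LinearMap.ker (toEuclideanLin (A - B)ᴴ),
      RCLike.re ⟪v, toEuclideanLin (A * Aᴴ) v⟫_𝕜 ≤ RCLike.re ⟪v, toEuclideanLin (B * Bᴴ) v⟫_𝕜 := by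
    intro v hv
    rw [LinearMap.mem_ker, conjTranspose_sub, map_sub, LinearMap.sub_apply, sub_eq_zero] at hv
    rw [inner_toEuclideanLin_mul_conjTranspose_self, inner_toEuclideanLin_mul_conjTranspose_self,
      hv]
  have := (isSymmetric_toEuclideanLin_iff.2 hA).card_filter_add_finrank_le_of_re_inner_le
    hA.toEuclideanLin_eigenvectorBasis (isSymmetric_toEuclideanLin_iff.2 hB)
    hB.toEuclideanLin_eigenvectorBasis _ hV (x := x)
  have hker := finrank_ker_toEuclideanLin_add_rank (A - B)ᴴ
  open scoped ComplexOrder in rw [rank_conjTranspose] at hker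
  rw [finrank_euclideanSpace] at this
  omega

end Matrix

theorem esd_rank_inequality_general {m k : ℕ}
    (A B : Matrix (Fin m) (Fin k) ℂ) (x : ℝ) :
    |ESD (isHermitian_mul_conjTranspose_self A) x -
      ESD (isHermitian_mul_conjTranspose_self B) x| ≤ ((A - B).rank : ℝ) / m := by
  have hBA := card_eigenvalues_mul_conjTranspose_self_le_add_rank A B x
  have hAB := card_eigenvalues_mul_conjTranspose_self_le_add_rank B A x
  rw [← neg_sub, rank_neg] at hAB
  rw [ESD, ESD, ← sub_div, abs_div, Nat.abs_cast]
  gcongr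
  rw [abs_sub_le_iff, sub_le_iff_le_add', sub_le_iff_le_add']
  exact ⟨mod_cast hAB, mod_cast hBA⟩

/-- Rank inequality: for `m × k` complex matrices `A`, `B`,
`sup_x |F^{AA*}(x) - F^{BB*}(x)| ≤ rank(A - B) / m`. -/
theorem esd_rank_inequality {m k : ℕ} (hm : 0 < m)
    (A B : Matrix (Fin m) (Fin k) ℂ) (x : ℝ) :
    |ESD (isHermitian_mul_conjTranspose_self A) x -
      ESD (isHermitian_mul_conjTranspose_self B) x| ≤ ((A - B).rank : ℝ) / m :=
  esd_rank_inequality_general A B x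
end

section
/- Let F₁, F₂ be distribution functions and let G satisfy sup_x |G(x+θ) - G(x)| ≤ g(θ) for all θ ≥ 0, where g is increasing and continuous with g(0) = 0. Then ‖F₁ - G‖ ≤ 3·max{‖F₂ - G‖, L(F₁, F₂), g(L(F₁, F₂))}, where ‖·‖ denotes the sup norm and L the Lévy distance. -/
/-- The Lévy distance between two functions `F, G : ℝ → ℝ`. -/
noncomputable def levyDist (F G : ℝ → ℝ) : ℝ :=
  sInf {ε : ℝ | 0 < ε ∧ ∀ x, F (x - ε) - ε ≤ G x ∧ G x ≤ F (x + ε) + ε}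

/-!
For every admissible `ε` in the definition of the Lévy distance, comparing `F₁ x` with
`F₂ (x ± ε)`, then with `G (x ± ε)`, and finally with `G x` gives
`|F₁ x - G x| ≤ ‖F₂ - G‖ + ε + g ε`. Since `F₁` is monotone, every `ε > L(F₁, F₂)` is
admissible, so continuity of `g` lets `ε ↓ L(F₁, F₂)`; each of the three summands is at most the
maximum.
-/

open Filter Set Topology

def levySet (F G : ℝ → ℝ) : Set ℝ :=
  {ε : ℝ | 0 < ε ∧ ∀ x, F (x - ε) - ε ≤ G x ∧ G x ≤ F (x + ε) + ε}

section LevySet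

variable {F G : ℝ → ℝ} {δ ε : ℝ}

theorem levyDist_eq_sInf_levySet : levyDist F G = sInf (levySet F G) := rfl

theorem mem_levySet_of_le (hF : Monotone F) (hδ : δ ∈ levySet F G) (hδε : δ ≤ ε) :
    ε ∈ levySet F G := by
  refine ⟨hδ.1.trans_le hδε, fun x => ⟨?_, ?_⟩⟩
  · have := hF (show x - ε ≤ x - δ by linarith)
    linarith [(hδ.2 x).1]
  · have := hF (show x + δ ≤ x + ε by linarith)
    linarith [(hδ.2 x).2]

theorem mem_levySet_of_levyDist_lt (hF : Monotone F) (hne : (levySet F G).Nonempty)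
    (hε : levyDist F G < ε) : ε ∈ levySet F G := by
  rw [levyDist_eq_sInf_levySet] at hε
  obtain ⟨δ, hδ, hδε⟩ := (csInf_lt_iff ⟨0, fun _ h => h.1.le⟩ hne).mp hε
  exact mem_levySet_of_le hF hδ hδε.le

theorem one_mem_levySet (hF : ∀ x, F x ∈ Icc (0 : ℝ) 1) (hG : ∀ x, G x ∈ Icc (0 : ℝ) 1) :
    (1 : ℝ) ∈ levySet F G :=
  ⟨one_pos, fun x => ⟨by linarith [(hF (x - 1)).2, (hG x).1],
    by linarith [(hG x).2, (hF (x + 1)).1]⟩⟩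

end LevySet

theorem Monotone.mem_Icc_of_tendsto {F : ℝ → ℝ} (hF : Monotone F) (h0 : Tendsto F atBot (𝓝 0))
    (h1 : Tendsto F atTop (𝓝 1)) (x : ℝ) : F x ∈ Icc (0 : ℝ) 1 :=
  ⟨hF.le_of_tendsto h0 x, hF.ge_of_tendsto h1 x⟩

theorem add_add_le_three_mul_max (a b c : ℝ) : a + b + c ≤ 3 * max a (max b c) := by
  linarith [le_max_left a (max b c), le_max_right a (max b c), le_max_left b c, le_max_right b c]

section ModulusOfContinuity

variable {F₁ F₂ G g : ℝ → ℝ} {D : ℝ}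

theorem abs_sub_le_of_mem_levySet (hG : ∀ x θ, 0 ≤ θ → |G (x + θ) - G x| ≤ g θ)
    (hD : ∀ y, |F₂ y - G y| ≤ D) {ε : ℝ} (hε : ε ∈ levySet F₁ F₂) (x : ℝ) :
    |F₁ x - G x| ≤ D + ε + g ε := by
  have hupper : F₁ x ≤ F₂ (x + ε) + ε := by simpa using (hε.2 (x + ε)).1
  have hlower : F₂ (x - ε) - ε ≤ F₁ x := by simpa using (hε.2 (x - ε)).2
  have hG_right := abs_le.mp (hG x ε hε.1.le)
  have hG_left := abs_le.mp (hG (x - ε) ε hε.1.le)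
  rw [sub_add_cancel] at hG_left
  have hD_right := abs_le.mp (hD (x + ε))
  have hD_left := abs_le.mp (hD (x - ε))
  exact abs_le.mpr ⟨by linarith, by linarith⟩

theorem abs_sub_le_add_levyDist_add (hF₁ : Monotone F₁) (hne : (levySet F₁ F₂).Nonempty)
    (hg : Continuous g) (hG : ∀ x θ, 0 ≤ θ → |G (x + θ) - G x| ≤ g θ)
    (hD : ∀ y, |F₂ y - G y| ≤ D) (x : ℝ) :
    |F₁ x - G x| ≤ D + levyDist F₁ F₂ + g (levyDist F₁ F₂) := by
  set L := levyDist F₁ F₂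
  have hbound : Tendsto (fun ε => D + ε + g ε) (𝓝[>] L) (𝓝 (D + L + g L)) :=
    ((continuous_const.add continuous_id).add hg).continuousWithinAt
  refine ge_of_tendsto hbound ?_
  filter_upwards [self_mem_nhdsWithin] with ε (hε : L < ε)
  exact abs_sub_le_of_mem_levySet hG hD (mem_levySet_of_levyDist_lt hF₁ hne hε) x

end ModulusOfContinuity

theorem sup_dist_le_three_max_general (F₁ F₂ G : ℝ → ℝ) (g : ℝ → ℝ)
    (hF₁mono : Monotone F₁) (hF₁0 : Filter.Tendsto F₁ Filter.atBot (nhds 0))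
    (hF₁1 : Filter.Tendsto F₁ Filter.atTop (nhds 1))
    (hF₂mono : Monotone F₂) (hF₂0 : Filter.Tendsto F₂ Filter.atBot (nhds 0))
    (hF₂1 : Filter.Tendsto F₂ Filter.atTop (nhds 1))
    (hg_cont : Continuous g)
    (hG : ∀ x θ, 0 ≤ θ → |G (x + θ) - G x| ≤ g θ)
    (hbdd : BddAbove (Set.range fun x => |F₂ x - G x|)) :
    ∀ x, |F₁ x - G x| ≤
      3 * max (⨆ y, |F₂ y - G y|)
        (max (levyDist F₁ F₂) (g (levyDist F₁ F₂))) := by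
  intro x
  -- `sInf ∅ = 0`, so the bound needs an admissible `ε` to exist.
  have hne : (levySet F₁ F₂).Nonempty :=
    ⟨1, one_mem_levySet (hF₁mono.mem_Icc_of_tendsto hF₁0 hF₁1)
      (hF₂mono.mem_Icc_of_tendsto hF₂0 hF₂1)⟩
  calc |F₁ x - G x|
      ≤ (⨆ y, |F₂ y - G y|) + levyDist F₁ F₂ + g (levyDist F₁ F₂) :=
        abs_sub_le_add_levyDist_add hF₁mono hne hg_cont hG (le_ciSup hbdd) x
    _ ≤ _ := add_add_le_three_mul_max _ _ _

/-- If `F₁, F₂` are distribution functions and `G` has modulus of continuity `g`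
(increasing, continuous, `g 0 = 0`), then
`‖F₁ - G‖ ≤ 3 max{‖F₂ - G‖, L(F₁,F₂), g(L(F₁,F₂))}`. -/
theorem sup_dist_le_three_max (F₁ F₂ G : ℝ → ℝ) (g : ℝ → ℝ)
    (hF₁mono : Monotone F₁) (hF₁0 : Filter.Tendsto F₁ Filter.atBot (nhds 0))
    (hF₁1 : Filter.Tendsto F₁ Filter.atTop (nhds 1))
    (hF₂mono : Monotone F₂) (hF₂0 : Filter.Tendsto F₂ Filter.atBot (nhds 0))
    (hF₂1 : Filter.Tendsto F₂ Filter.atTop (nhds 1))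
    (hg_mono : Monotone g) (hg_cont : Continuous g) (hg0 : g 0 = 0)
    (hG : ∀ x θ, 0 ≤ θ → |G (x + θ) - G x| ≤ g θ)
    (hbdd : BddAbove (Set.range fun x => |F₂ x - G x|)) :
    ∀ x, |F₁ x - G x| ≤
      3 * max (⨆ y, |F₂ y - G y|)
        (max (levyDist F₁ F₂) (g (levyDist F₁ F₂))) :=
  sup_dist_le_three_max_general F₁ F₂ G g hF₁mono hF₁0 hF₁1 hF₂mono hF₂0 hF₂1 hg_cont hG hbdd
end

section
/- Let z = u + iv with v > 0, let A be an n×n Hermitian complex matrix, and let A_k be the (n-1)×(n-1) matrix obtained from A by deleting its k-th row and column. Then |tr((A - zIₙ)⁻¹) - tr((A_k - zI_{n-1})⁻¹)| ≤ 1/v. -/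
/-!
Deleting row and column `k` is a Schur complement: for `R = (A - z)⁻¹` one has
`tr R - tr R_k = (R²)_kk / R_kk`. Since `A` is Hermitian,
`R - Rᴴ = (z - z̄) R Rᴴ = (z - z̄) Rᴴ R`, so `R` is normal and `Im R_kk = Im z · ∑ⱼ |R_kj|²`,
while by AM–GM and normality `|(R²)_kk| = |∑ⱼ R_kj R_jk| ≤ ∑ⱼ |R_kj|²`.
Hence `|(R²)_kk| · Im z ≤ Im R_kk ≤ |R_kk|`.
-/

open Matrix ComplexConjugate

section

variable {m n : Type*} [Fintype n]

theorem Matrix.norm_mul_self_apply_le {α : Type*} [NonUnitalSeminormedRing α]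
    (B : Matrix n n α) (k : n) :
    ‖(B * B) k k‖ ≤ (∑ j, ‖B k j‖ ^ 2 + ∑ j, ‖B j k‖ ^ 2) / 2 := by
  rw [mul_apply, ← Finset.sum_add_distrib, Finset.sum_div]
  refine (norm_sum_le _ _).trans (Finset.sum_le_sum fun j _ => ?_)
  nlinarith [norm_mul_le (B k j) (B j k), sq_nonneg (‖B k j‖ - ‖B j k‖)]

variable {𝕜 : Type*} [RCLike 𝕜]

theorem Matrix.mul_conjTranspose_apply_self (B : Matrix m n 𝕜) (i : m) :
    (B * Bᴴ) i i = ∑ j, (‖B i j‖ ^ 2 : 𝕜) := by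
  simp [mul_apply, RCLike.mul_conj]

theorem Matrix.conjTranspose_mul_apply_self (B : Matrix n m 𝕜) (i : m) :
    (Bᴴ * B) i i = ∑ j, (‖B j i‖ ^ 2 : 𝕜) := by
  simp [mul_apply, RCLike.conj_mul]

end

section Schur

variable {K : Type*} [Field K] {m : ℕ}

theorem Matrix.inv_submatrix_succAbove {M N : Matrix (Fin (m + 1)) (Fin (m + 1)) K}
    (hMN : M * N = 1) {k : Fin (m + 1)} (hk : N k k ≠ 0) :
    (M.submatrix k.succAbove k.succAbove)⁻¹ = of fun i j =>
      N (k.succAbove i) (k.succAbove j) - N (k.succAbove i) k * N k (k.succAbove j) / N k k := by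
  refine inv_eq_right_inv ?_
  have hrow (i : Fin m) (c : Fin (m + 1)) :
      ∑ l, M (k.succAbove i) (k.succAbove l) * N (k.succAbove l) c =
        (1 : Matrix _ _ K) (k.succAbove i) c - M (k.succAbove i) k * N k c := by
    rw [← hMN, mul_apply, Fin.sum_univ_succAbove _ k]
    ring
  ext i j
  simp only [mul_apply, submatrix_apply, of_apply, mul_sub, Finset.sum_sub_distrib]
  simp only [← mul_div_assoc, ← mul_assoc, ← Finset.sum_div, ← Finset.sum_mul, hrow,
    one_apply, Fin.succAbove_right_inj, Fin.succAbove_ne, if_false]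
  field_simp
  ring

theorem Matrix.trace_inv_sub_trace_inv_submatrix_succAbove
    {M : Matrix (Fin (m + 1)) (Fin (m + 1)) K} (hM : IsUnit M) {k : Fin (m + 1)}
    (hk : M⁻¹ k k ≠ 0) :
    M⁻¹.trace - (M.submatrix k.succAbove k.succAbove)⁻¹.trace = (M⁻¹ * M⁻¹) k k / M⁻¹ k k := by
  rw [inv_submatrix_succAbove (mul_nonsing_inv M ((isUnit_iff_isUnit_det M).1 hM)) hk]
  simp only [trace, diag_apply, of_apply, mul_apply, Fin.sum_univ_succAbove _ k,
    Finset.sum_sub_distrib, ← Finset.sum_div]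
  field_simp
  simp only [mul_comm (M⁻¹ k _)]
  ring

end Schur

namespace Matrix.IsHermitian

variable {n : Type*} [Fintype n] [DecidableEq n] {A : Matrix n n ℂ}

theorem isUnit_sub_smul_one (hA : A.IsHermitian) {z : ℂ} (hz : z.im ≠ 0) :
    IsUnit (A - z • 1) := by
  rw [← neg_sub, IsUnit.neg_iff, isUnit_iff_isUnit_det, isUnit_iff_ne_zero, smul_one_eq_diagonal,
    ← scalar_apply, ← eval_charpoly, hA.charpoly_eq, Polynomial.eval_prod,
    Finset.prod_ne_zero_iff]
  intro i _ h
  apply hz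
  simpa using congrArg Complex.im h

theorem conjTranspose_inv_sub_smul_one (hA : A.IsHermitian) (z : ℂ) :
    (A - z • 1)⁻¹ᴴ = (A - conj z • 1)⁻¹ := by
  rw [conjTranspose_nonsing_inv, conjTranspose_sub, hA.eq, conjTranspose_smul, conjTranspose_one]
  rfl

theorem inv_sub_smul_one_sub_conjTranspose (hA : A.IsHermitian) {z : ℂ} (hz : z.im ≠ 0) :
    (A - z • 1)⁻¹ - (A - z • 1)⁻¹ᴴ = (z - conj z) • ((A - z • 1)⁻¹ * (A - z • 1)⁻¹ᴴ) ∧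
    (A - z • 1)⁻¹ - (A - z • 1)⁻¹ᴴ = (z - conj z) • ((A - z • 1)⁻¹ᴴ * (A - z • 1)⁻¹) := by
  have hunit : IsUnit (A - z • 1) ↔ IsUnit (A - conj z • 1) :=
    iff_of_true (hA.isUnit_sub_smul_one hz) (hA.isUnit_sub_smul_one (by simpa using hz))
  rw [hA.conjTranspose_inv_sub_smul_one]
  constructor
  · rw [inv_sub_inv hunit, sub_sub_sub_cancel_left, ← sub_smul, Matrix.mul_smul, mul_one,
      Matrix.smul_mul]
  · rw [← neg_sub, inv_sub_inv hunit.symm, sub_sub_sub_cancel_left, ← sub_smul, Matrix.mul_smul,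
      mul_one, Matrix.smul_mul, ← neg_smul, neg_sub]

theorem inv_sub_smul_one_mul_conjTranspose_comm (hA : A.IsHermitian) {z : ℂ} (hz : z.im ≠ 0) :
    (A - z • 1)⁻¹ * (A - z • 1)⁻¹ᴴ = (A - z • 1)⁻¹ᴴ * (A - z • 1)⁻¹ := by
  obtain ⟨h₁, h₂⟩ := hA.inv_sub_smul_one_sub_conjTranspose hz
  refine smul_right_injective _ (?_ : z - conj z ≠ 0) (h₁.symm.trans h₂)
  rw [sub_ne_zero]
  exact fun h => hz (Complex.conj_eq_iff_im.1 h.symm)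

theorem sum_norm_sq_inv_sub_smul_one_col_eq_row (hA : A.IsHermitian) {z : ℂ} (hz : z.im ≠ 0)
    (k : n) :
    ∑ j, ‖(A - z • 1)⁻¹ j k‖ ^ 2 = ∑ j, ‖(A - z • 1)⁻¹ k j‖ ^ 2 := by
  have := congrFun (congrFun (hA.inv_sub_smul_one_mul_conjTranspose_comm hz) k) k
  rw [mul_conjTranspose_apply_self, conjTranspose_mul_apply_self] at this
  exact_mod_cast this.symm

theorem im_inv_sub_smul_one_apply_self (hA : A.IsHermitian) {z : ℂ} (hz : z.im ≠ 0)
    (k : n) :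
    ((A - z • 1)⁻¹ k k).im = z.im * ∑ j, ‖(A - z • 1)⁻¹ k j‖ ^ 2 := by
  have := congrArg Complex.im
    (congrFun (congrFun (hA.inv_sub_smul_one_sub_conjTranspose hz).1 k) k)
  rw [smul_apply, mul_conjTranspose_apply_self, sub_apply, conjTranspose_apply] at this
  simp only [RCLike.star_def, Complex.sub_im, Complex.conj_im, sub_neg_eq_add,
    Complex.coe_algebraMap, ← Complex.ofReal_pow, ← Complex.ofReal_sum, smul_eq_mul,
    Complex.mul_im, Complex.sub_re, Complex.conj_re, sub_self, Complex.ofReal_im, mul_zero,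
    Complex.ofReal_re, zero_add] at this
  linear_combination this / 2

theorem inv_sub_smul_one_apply_self_ne_zero (hA : A.IsHermitian) {z : ℂ} (hz : z.im ≠ 0)
    (k : n) :
    (A - z • 1)⁻¹ k k ≠ 0 := by
  intro h
  have hrow : ∀ j, (A - z • 1)⁻¹ k j = 0 := by
    have := hA.im_inv_sub_smul_one_apply_self hz k
    rw [h, Complex.zero_im, zero_eq_mul, or_iff_right hz,
      Finset.sum_eq_zero_iff_of_nonneg fun j _ => by positivity] at this
    simpa using this
  have hinv := nonsing_inv_mul _ ((isUnit_iff_isUnit_det _).1 (hA.isUnit_sub_smul_one hz))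
  simpa [mul_apply, hrow] using congrFun (congrFun hinv k) k

theorem norm_inv_sub_smul_one_sq_apply_self_le (hA : A.IsHermitian) {z : ℂ} (hz : z.im ≠ 0)
    (k : n) : ‖((A - z • 1)⁻¹ * (A - z • 1)⁻¹) k k‖ ≤ ∑ j, ‖(A - z • 1)⁻¹ k j‖ ^ 2 := by
  have := norm_mul_self_apply_le (A - z • 1)⁻¹ k
  rwa [hA.sum_norm_sq_inv_sub_smul_one_col_eq_row hz, add_self_div_two] at this

end Matrix.IsHermitian

/-- For a Hermitian matrix `A`, `z = u + iv` with `v > 0`, and `A_k` obtained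
from `A` by deleting the `k`-th row and column, the traces of the resolvents
satisfy `|tr (A - zI)⁻¹ - tr (A_k - zI)⁻¹| ≤ 1/v`. -/
theorem trace_resolvent_submatrix_diff_le {n : ℕ}
    (A : Matrix (Fin (n + 1)) (Fin (n + 1)) ℂ) (hA : A.IsHermitian)
    (k : Fin (n + 1)) (u v : ℝ) (hv : 0 < v) (z : ℂ) (hz : z = ⟨u, v⟩) :
    ‖((A - z • (1 : Matrix (Fin (n + 1)) (Fin (n + 1)) ℂ))⁻¹.trace -
          ((A.submatrix k.succAbove k.succAbove
              - z • (1 : Matrix (Fin n) (Fin n) ℂ))⁻¹).trace)‖ ≤ 1 / v := by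
  have hzv : z.im = v := by rw [hz]
  have hz0 : z.im ≠ 0 := hzv ▸ hv.ne'
  have hk := hA.inv_sub_smul_one_apply_self_ne_zero hz0 k
  have hsub : A.submatrix k.succAbove k.succAbove - z • 1 =
      (A - z • 1).submatrix k.succAbove k.succAbove := by
    ext i j
    simp [one_apply]
  rw [hsub, trace_inv_sub_trace_inv_submatrix_succAbove (hA.isUnit_sub_smul_one hz0) hk,
    norm_div, div_le_div_iff₀ (norm_pos_iff.2 hk) hv, one_mul]
  calc ‖((A - z • 1)⁻¹ * (A - z • 1)⁻¹) k k‖ * v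
      ≤ (∑ j, ‖(A - z • 1)⁻¹ k j‖ ^ 2) * v := by
        gcongr
        exact hA.norm_inv_sub_smul_one_sq_apply_self_le hz0 k
    _ = ((A - z • 1)⁻¹ k k).im := by rw [hA.im_inv_sub_smul_one_apply_self hz0, hzv, mul_comm]
    _ ≤ ‖(A - z • 1)⁻¹ k k‖ := Complex.im_le_norm _
end

section
/- For the Marčenko–Pastur law F_y with y ∈ (0, 1], a = (1-√y)², and all v > 0: sup_x ∫_{|u| < v} |F_y(x + u) - F_y(x)| du ≤ (11·√(2(1+y))/(3πy)) · v²/(√a + √v). -/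
open MeasureTheory

/-- The density of the Marčenko–Pastur law with ratio index `y` (σ² = 1). -/
noncomputable def mpDensity (y x : ℝ) : ℝ :=
  if (1 - Real.sqrt y) ^ 2 ≤ x ∧ x ≤ (1 + Real.sqrt y) ^ 2 then
    Real.sqrt (((1 + Real.sqrt y) ^ 2 - x) * (x - (1 - Real.sqrt y) ^ 2)) /
      (2 * Real.pi * x * y)
  else 0

/-- The distribution function of the Marčenko–Pastur law with index `y ≤ 1`. -/
noncomputable def mpCdf (y x : ℝ) : ℝ := ∫ t in Set.Iic x, mpDensity y t

/-!
On its support `[a, b]` the Marčenko–Pastur density satisfies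
`f_y(t) ≤ √b / (2πy) · t^{-1/2}` (drop the factor `t - a ≤ t` under the root), and it vanishes
below `a`. Hence for `x ≤ s` and `m = max x a` the increment `F_y(s) - F_y(x)` is at most
`(1 + √y)/(πy) · (√s - √m)`, and since `√m ≥ √a`, `√s - √m ≤ √(s - x) √v / (√a + √v)`
whenever `s - x ≤ v`. Integrating this Hölder-`1/2` bound against `∫_{|u|<v} √|u| du = 4/3 v^{3/2}`
gives the constant `4(1 + √y)/(3πy)`, and `1 + √y ≤ √(2(1 + y))`.
-/

open Real Set

lemma inv_sqrt_eq_rpow {t : ℝ} (ht : 0 ≤ t) : (√t)⁻¹ = t ^ (-(1 / 2) : ℝ) := by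
  rw [rpow_neg ht, sqrt_eq_rpow]

lemma integrableOn_inv_sqrt_Ioc (b : ℝ) : IntegrableOn (fun t : ℝ => (√t)⁻¹) (Ioc 0 b) :=
  (intervalIntegral.intervalIntegrable_rpow' (by norm_num : (-1 : ℝ) < -(1 / 2))).1.congr_fun
    (fun _ ht => (inv_sqrt_eq_rpow ht.1.le).symm) measurableSet_Ioc

lemma integral_inv_sqrt_Ioc {m s : ℝ} (hm : 0 ≤ m) (hms : m ≤ s) :
    ∫ t in Ioc m s, (√t)⁻¹ = 2 * (√s - √m) := by
  rw [setIntegral_congr_fun measurableSet_Ioc fun t ht => inv_sqrt_eq_rpow (hm.trans ht.1.le),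
    ← intervalIntegral.integral_of_le hms, integral_rpow (Or.inl (by norm_num)),
    show (-(1 / 2) : ℝ) + 1 = 1 / 2 by norm_num, ← sqrt_eq_rpow, ← sqrt_eq_rpow]
  ring

lemma integral_sqrt_abs_Ioo {v : ℝ} (hv : 0 ≤ v) :
    ∫ u in Ioo (-v) v, √|u| = 4 / 3 * (v * √v) := by
  have hcont : Continuous fun u : ℝ => √|u| := continuous_abs.sqrt
  have hpos : ∫ u in (0 : ℝ)..v, √|u| = 2 / 3 * (v * √v) := by
    rw [intervalIntegral.integral_congr (g := fun u : ℝ => u ^ (1 / 2 : ℝ)) fun u hu => by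
        rw [uIcc_of_le hv] at hu
        simp only [abs_of_nonneg hu.1, sqrt_eq_rpow],
      integral_rpow (Or.inl (by norm_num)), zero_rpow (by norm_num),
      show (1 / 2 : ℝ) + 1 = 1 + 1 / 2 by norm_num, rpow_add' hv (by norm_num), rpow_one,
      ← sqrt_eq_rpow]
    ring
  have hneg : ∫ u in (-v)..0, √|u| = 2 / 3 * (v * √v) := by
    have hflip := intervalIntegral.integral_comp_neg (a := 0) (b := v) fun u => √|u|
    simp only [abs_neg, neg_zero] at hflip
    rw [← hflip, hpos]
  rw [← integral_Ioc_eq_integral_Ioo, ← intervalIntegral.integral_of_le (by linarith),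
    ← intervalIntegral.integral_add_adjacent_intervals (b := 0) (hcont.intervalIntegrable _ _)
      (hcont.intervalIntegrable _ _), hneg, hpos]
  ring

lemma sqrt_sub_sqrt_le {A m s v : ℝ} (hA : 0 ≤ A) (hAm : A ≤ √m) (hm : 0 ≤ m) (hms : m ≤ s)
    (hsv : s - m ≤ v) (hv : 0 < v) :
    √s - √m ≤ √(s - m) * √v / (A + √v) := by
  have hq : √s ^ 2 = s := sq_sqrt (hm.trans hms)
  have hp : √m ^ 2 = m := sq_sqrt hm
  have hW : √(s - m) ^ 2 = s - m := sq_sqrt (by linarith)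
  have hpq : √m ≤ √s := sqrt_le_sqrt hms
  have hWV : √(s - m) ≤ √v := sqrt_le_sqrt hsv
  have hV : 0 < √v := sqrt_pos.2 hv
  have hdiff : √s - √m ≤ √(s - m) := by
    nlinarith [sqrt_nonneg m, sqrt_nonneg (s - m), sq_nonneg (√s - √m - √(s - m))]
  rw [le_div_iff₀ (by linarith)]
  nlinarith [mul_nonneg (sub_nonneg.2 hWV) (sub_nonneg.2 hdiff),
    mul_le_mul_of_nonneg_left hAm (sub_nonneg.2 hpq)]

lemma setIntegral_abs_sub_le_of_monotone {F : ℝ → ℝ} (hF : Monotone F) {K v : ℝ} (hv : 0 ≤ v)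
    (hinc : ∀ x s, x ≤ s → s - x ≤ v → F s - F x ≤ K * √(s - x)) (x : ℝ) :
    ∫ u in Ioo (-v) v, |F (x + u) - F x| ≤ K * (4 / 3 * (v * √v)) := by
  have hpt : ∀ u ∈ Ioo (-v) v, |F (x + u) - F x| ≤ K * √|u| := by
    intro u hu
    rcases le_total 0 u with h0 | h0
    · rw [abs_of_nonneg (sub_nonneg.2 (hF (by linarith))), abs_of_nonneg h0]
      simpa using hinc x (x + u) (by linarith) (by linarith [hu.2])
    · rw [abs_of_nonpos (sub_nonpos.2 (hF (by linarith))), abs_of_nonpos h0, neg_sub]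
      simpa using hinc (x + u) x (by linarith) (by linarith [hu.1])
  have hbound : IntegrableOn (fun u => K * √|u|) (Ioo (-v) v) :=
    (continuous_const.mul continuous_abs.sqrt).integrableOn_Icc.mono_set Ioo_subset_Icc_self
  have hint : IntegrableOn (fun u => |F (x + u) - F x|) (Ioo (-v) v) := by
    refine hbound.mono'
      (((hF.measurable.comp (measurable_const_add x)).sub_const _).abs.aestronglyMeasurable) ?_
    refine (ae_restrict_iff' measurableSet_Ioo).2 (Filter.Eventually.of_forall fun u hu => ?_)
    rw [norm_eq_abs, abs_abs]
    exact hpt u hu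
  calc ∫ u in Ioo (-v) v, |F (x + u) - F x|
      ≤ ∫ u in Ioo (-v) v, K * √|u| := setIntegral_mono_on hint hbound measurableSet_Ioo hpt
    _ = K * (4 / 3 * (v * √v)) := by rw [integral_const_mul, integral_sqrt_abs_Ioo hv]

section MarchenkoPastur

variable {y : ℝ}

lemma mpDensity_nonneg (hy : 0 ≤ y) (t : ℝ) : 0 ≤ mpDensity y t := by
  unfold mpDensity
  split_ifs with h
  · have ht : 0 ≤ t := (sq_nonneg _).trans h.1
    positivity
  · exact le_rfl

lemma mpDensity_eq_zero_of_le {t : ℝ} (ht : t ≤ (1 - √y) ^ 2) : mpDensity y t = 0 := by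
  unfold mpDensity
  split_ifs with h
  · simp [le_antisymm ht h.1]
  · rfl

lemma mpDensity_eq_zero_of_lt {t : ℝ} (ht : (1 + √y) ^ 2 < t) : mpDensity y t = 0 :=
  if_neg fun h => ht.not_ge h.2

lemma mpDensity_le (hy : 0 < y) (t : ℝ) :
    mpDensity y t ≤ (1 + √y) / (2 * π * y) * (√t)⁻¹ := by
  unfold mpDensity
  split_ifs with h
  · rcases ((sq_nonneg _).trans h.1).eq_or_lt with rfl | ht
    · simp
    have hnum : ((1 + √y) ^ 2 - t) * (t - (1 - √y) ^ 2) ≤ (1 + √y) ^ 2 * t := by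
      nlinarith [sq_nonneg (1 - √y), sub_nonneg.2 h.1, sub_nonneg.2 h.2]
    have hroot : √(((1 + √y) ^ 2 - t) * (t - (1 - √y) ^ 2)) ≤ (1 + √y) * √t := by
      calc _ ≤ √((1 + √y) ^ 2 * t) := sqrt_le_sqrt hnum
        _ = (1 + √y) * √t := by rw [sqrt_mul (sq_nonneg _), sqrt_sq (by positivity)]
    have hst : √t * √t = t := mul_self_sqrt ht.le
    rw [div_le_iff₀ (by positivity)]
    calc _ ≤ (1 + √y) * √t := hroot
      _ = _ := by field_simp; linear_combination hst
  · positivity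

lemma measurable_mpDensity (y : ℝ) : Measurable (mpDensity y) :=
  Measurable.ite measurableSet_Icc (by fun_prop) measurable_const

lemma integrable_mpDensity (hy : 0 < y) : Integrable (mpDensity y) := by
  have hbound : IntegrableOn (fun t => (1 + √y) / (2 * π * y) * (√t)⁻¹) (Ioc 0 ((1 + √y) ^ 2)) :=
    (integrableOn_inv_sqrt_Ioc _).const_mul _
  refine (hbound.integrable_indicator measurableSet_Ioc).mono'
    (measurable_mpDensity y).aestronglyMeasurable (Filter.Eventually.of_forall fun t => ?_)
  rw [norm_eq_abs, abs_of_nonneg (mpDensity_nonneg hy.le t)]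
  by_cases ht : t ∈ Ioc 0 ((1 + √y) ^ 2)
  · rw [indicator_of_mem ht]
    exact mpDensity_le hy t
  · rw [indicator_of_notMem ht]
    rcases not_and_or.1 ht with h | h
    · exact (mpDensity_eq_zero_of_le ((not_lt.1 h).trans (sq_nonneg _))).le
    · exact (mpDensity_eq_zero_of_lt (not_le.1 h)).le

lemma mpCdf_sub_mpCdf (hy : 0 < y) {x s : ℝ} (h : x ≤ s) :
    mpCdf y s - mpCdf y x = ∫ t in Ioc x s, mpDensity y t := by
  have hi := integrable_mpDensity hy
  rw [mpCdf, mpCdf, ← Iic_union_Ioc_eq_Iic h,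
    setIntegral_union (Iic_disjoint_Ioc le_rfl) measurableSet_Ioc hi.integrableOn hi.integrableOn]
  ring

lemma monotone_mpCdf (hy : 0 < y) : Monotone (mpCdf y) := fun _ _ h =>
  sub_nonneg.1 <| (mpCdf_sub_mpCdf hy h).symm ▸
    setIntegral_nonneg measurableSet_Ioc fun t _ => mpDensity_nonneg hy.le t

lemma mpCdf_eq_zero_of_le {x : ℝ} (hx : x ≤ (1 - √y) ^ 2) : mpCdf y x = 0 :=
  setIntegral_eq_zero_of_forall_eq_zero fun _ ht => mpDensity_eq_zero_of_le (le_trans ht hx)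

lemma mpCdf_max (x : ℝ) : mpCdf y (max x ((1 - √y) ^ 2)) = mpCdf y x := by
  rcases le_total x ((1 - √y) ^ 2) with h | h
  · rw [max_eq_right h, mpCdf_eq_zero_of_le le_rfl, mpCdf_eq_zero_of_le h]
  · rw [max_eq_left h]

lemma mpCdf_sub_mpCdf_le_sqrt (hy : 0 < y) {m s : ℝ} (hm : 0 ≤ m) (hms : m ≤ s) :
    mpCdf y s - mpCdf y m ≤ (1 + √y) / (π * y) * (√s - √m) := by
  have hbound := ((integrableOn_inv_sqrt_Ioc s).mono_set (Ioc_subset_Ioc_left hm)).const_mul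
    ((1 + √y) / (2 * π * y))
  calc mpCdf y s - mpCdf y m = ∫ t in Ioc m s, mpDensity y t := mpCdf_sub_mpCdf hy hms
    _ ≤ ∫ t in Ioc m s, (1 + √y) / (2 * π * y) * (√t)⁻¹ :=
      setIntegral_mono_on (integrable_mpDensity hy).integrableOn hbound measurableSet_Ioc
        fun t _ => mpDensity_le hy t
    _ = (1 + √y) / (π * y) * (√s - √m) := by
      rw [integral_const_mul, integral_inv_sqrt_Ioc hm hms]
      field_simp

lemma mpCdf_sub_mpCdf_le (hy : 0 < y) {v : ℝ} (hv : 0 < v) {x s : ℝ} (hxs : x ≤ s)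
    (hsv : s - x ≤ v) :
    mpCdf y s - mpCdf y x ≤
      (1 + √y) / (π * y) * (√v / (√((1 - √y) ^ 2) + √v)) * √(s - x) := by
  rcases le_or_gt s ((1 - √y) ^ 2) with hsa | has
  · rw [mpCdf_eq_zero_of_le hsa, mpCdf_eq_zero_of_le (hxs.trans hsa), sub_zero]
    positivity
  set m := max x ((1 - √y) ^ 2)
  have hms : m ≤ s := max_le hxs has.le
  have hm : 0 ≤ m := (sq_nonneg _).trans (le_max_right _ _)
  have hroot : √s - √m ≤ √(s - x) * √v / (√((1 - √y) ^ 2) + √v) :=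
    (sqrt_sub_sqrt_le (sqrt_nonneg _) (sqrt_le_sqrt (le_max_right _ _)) hm hms
      (by linarith [le_max_left x ((1 - √y) ^ 2)]) hv).trans
      (by gcongr; exact le_max_left _ _)
  calc mpCdf y s - mpCdf y x = mpCdf y s - mpCdf y m := by rw [mpCdf_max]
    _ ≤ (1 + √y) / (π * y) * (√s - √m) := mpCdf_sub_mpCdf_le_sqrt hy hm hms
    _ ≤ (1 + √y) / (π * y) * (√(s - x) * √v / (√((1 - √y) ^ 2) + √v)) := by gcongr
    _ = _ := by ring

end MarchenkoPastur

lemma one_add_sqrt_le_sqrt_two_mul {y : ℝ} (hy : 0 ≤ y) : 1 + √y ≤ √(2 * (1 + y)) := by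
  refine le_sqrt_of_sq_le ?_
  nlinarith [sq_sqrt hy, sq_nonneg (1 - √y)]

theorem mp_cdf_integral_increment_bound_general (y : ℝ) (hy0 : 0 < y)
    (v : ℝ) (hv : 0 < v) :
    ∀ x : ℝ, ∫ u in Set.Ioo (-v) v, |mpCdf y (x + u) - mpCdf y x| ≤
      (11 * Real.sqrt (2 * (1 + y)) / (3 * Real.pi * y)) *
        (v ^ 2 / (Real.sqrt ((1 - Real.sqrt y) ^ 2) + Real.sqrt v)) := by
  intro x
  refine (setIntegral_abs_sub_le_of_monotone (monotone_mpCdf hy0) hv.le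
    (fun _ _ => mpCdf_sub_mpCdf_le hy0 hv) x).trans ?_
  have hvv : √v * √v = v := mul_self_sqrt hv.le
  have hconst : 4 * (1 + √y) ≤ 11 * √(2 * (1 + y)) := by
    linarith [one_add_sqrt_le_sqrt_two_mul hy0.le, sqrt_nonneg (2 * (1 + y))]
  calc (1 + √y) / (π * y) * (√v / (√((1 - √y) ^ 2) + √v)) * (4 / 3 * (v * √v))
      = 4 * (1 + √y) / (3 * π * y) * (v ^ 2 / (√((1 - √y) ^ 2) + √v)) := by
        field_simp
        linear_combination hvv
    _ ≤ _ := by gcongr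

/-- For the Marčenko–Pastur law `F_y`, `0 < y ≤ 1`, `a = (1-√y)²`, and `v > 0`:
`sup_x ∫_{|u|<v} |F_y(x+u) - F_y(x)| du ≤ (11√(2(1+y))/(3πy)) v²/(√a + √v)`. -/
theorem mp_cdf_integral_increment_bound (y : ℝ) (hy0 : 0 < y) (hy1 : y ≤ 1)
    (v : ℝ) (hv : 0 < v) :
    ∀ x : ℝ, ∫ u in Set.Ioo (-v) v, |mpCdf y (x + u) - mpCdf y x| ≤
      (11 * Real.sqrt (2 * (1 + y)) / (3 * Real.pi * y)) *
        (v ^ 2 / (Real.sqrt ((1 - Real.sqrt y) ^ 2) + Real.sqrt v)) :=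
  mp_cdf_integral_increment_bound_general y hy0 v hv
end
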